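/- Let ξ ≥ 1, let (opt_H)_{H ⊆ 𝒢} be an integer-feasible vector minimizing ∑_{H ⊆ 𝒢} f_H(opt_H), and let (x̂_H)_{H ⊆ 𝒢} be a fractionally feasible vector with ∑_{H ⊆ 𝒢} f̂_H(x̂_H) ≤ ξ · ∑_{H ⊆ 𝒢} f_H(opt_H). Set r = ⌈ ∑_{H ⊆ 𝒢} (x̂_H − ⌊x̂_H⌋) ⌉ and define e'_H = min( max(⌊x̂_H⌋, opt_H), ⌊x̂_H⌋ + r ) for every H ⊆ 𝒢. Then (e'_H)_{H ⊆ 𝒢} is integer-feasible and ∑_{H ⊆ 𝒢} f_H(e'_H) ≤ 2ξ · ∑_{H ⊆ 𝒢} f_H(opt_H). -/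

import Mathlib

open scoped BigOperators ENNReal

/-- The sum of the `k` smallest elements of a multiset of reals. -/
noncomputable def sumSmallest (s : Multiset ℝ) (k : ℕ) : ℝ :=
  ((s.sort (· ≤ ·)).take k).sum

/-- The bucket `B(H)`: all sets in the family whose assigned subset of items equals `H`. -/
noncomputable def bucket {G D : Type*} [Fintype D] [DecidableEq G]
    (sets : D → Finset G) (H : Finset G) : Finset D :=
  Finset.univ.filter (fun t => sets t = H)

/-- `fH sets w H k` is the sum of the `k` smallest weights among the sets in bucket `B(H)`. -/
noncomputable def fH {G D : Type*} [Fintype D] [DecidableEq G]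
    (sets : D → Finset G) (w : D → ℝ) (H : Finset G) (k : ℕ) : ℝ :=
  sumSmallest ((bucket sets H).val.map w) k

/-- The piecewise-linear extension of `f : ℕ → ℝ`:
`plExt f x = f z + (f (z+1) - f z) * (x - z)` for `z ≤ x ≤ z + 1`, `z = ⌊x⌋`. -/
noncomputable def plExt (f : ℕ → ℝ) (x : ℝ) : ℝ :=
  f ⌊x⌋₊ + (f (⌊x⌋₊ + 1) - f ⌊x⌋₊) * (x - (⌊x⌋₊ : ℝ))

/-- An integer vector `(x_H)_{H ⊆ 𝒢}` is integer-feasible if `0 ≤ x H ≤ |B(H)|` for all `H`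
and `∑_{H ∋ g} x H ≥ Q g` for all items `g`. -/
def IntFeasible {G D : Type*} [Fintype G] [Fintype D] [DecidableEq G]
    (sets : D → Finset G) (Q : G → ℕ) (x : Finset G → ℕ) : Prop :=
  (∀ H : Finset G, x H ≤ (bucket sets H).card) ∧
  (∀ g : G, Q g ≤ ∑ H ∈ Finset.univ.filter (fun H : Finset G => g ∈ H), x H)

/-- A real vector `(x_H)_{H ⊆ 𝒢}` is fractionally feasible if `0 ≤ x H ≤ |B(H)|` for all `H`
and `∑_{H ∋ g} x H ≥ Q g` for all items `g`. -/
def FracFeasible {G D : Type*} [Fintype G] [Fintype D] [DecidableEq G]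
    (sets : D → Finset G) (Q : G → ℕ) (x : Finset G → ℝ) : Prop :=
  (∀ H : Finset G, 0 ≤ x H ∧ x H ≤ ((bucket sets H).card : ℝ)) ∧
  (∀ g : G, (Q g : ℝ) ≤ ∑ H ∈ Finset.univ.filter (fun H : Finset G => g ∈ H), x H)


lemma sumSmallest_nonneg {s : Multiset ℝ} (h : ∀ a ∈ s, 0 ≤ a) (k : ℕ) :
    0 ≤ sumSmallest s k := by
  apply List.sum_nonneg
  intro a ha
  exact h a ((Multiset.mem_sort (· ≤ ·)).mp (List.mem_of_mem_take ha))

lemma sumSmallest_mono {s : Multiset ℝ} (h : ∀ a ∈ s, 0 ≤ a) {k l : ℕ} (hkl : k ≤ l) :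
    sumSmallest s k ≤ sumSmallest s l := by
  unfold sumSmallest
  obtain ⟨m, rfl⟩ := Nat.exists_eq_add_of_le hkl
  rw [List.take_add, List.sum_append]
  have h2 : 0 ≤ ((((s.sort (· ≤ ·)).drop k)).take m).sum := by
    apply List.sum_nonneg
    intro a ha
    exact h a ((Multiset.mem_sort (· ≤ ·)).mp (List.mem_of_mem_drop (List.mem_of_mem_take ha)))
  linarith

lemma fH_mem_nonneg {G D : Type*} [Fintype D] [DecidableEq G]
    (sets : D → Finset G) (w : D → ℝ) (hw : ∀ t, 0 ≤ w t) (H : Finset G) :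
    ∀ a ∈ (bucket sets H).val.map w, 0 ≤ a := by
  intro a ha
  obtain ⟨t, _, rfl⟩ := Multiset.mem_map.mp ha
  exact hw t

lemma fH_nonneg {G D : Type*} [Fintype D] [DecidableEq G]
    (sets : D → Finset G) (w : D → ℝ) (hw : ∀ t, 0 ≤ w t) (H : Finset G) (k : ℕ) :
    0 ≤ fH sets w H k :=
  sumSmallest_nonneg (fH_mem_nonneg sets w hw H) k

lemma fH_mono {G D : Type*} [Fintype D] [DecidableEq G]
    (sets : D → Finset G) (w : D → ℝ) (hw : ∀ t, 0 ≤ w t) (H : Finset G)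
    {k l : ℕ} (hkl : k ≤ l) : fH sets w H k ≤ fH sets w H l :=
  sumSmallest_mono (fH_mem_nonneg sets w hw H) hkl

lemma le_plExt {f : ℕ → ℝ} {x : ℝ} (hf : f ⌊x⌋₊ ≤ f (⌊x⌋₊ + 1)) (hx : 0 ≤ x) :
    f ⌊x⌋₊ ≤ plExt f x := by
  unfold plExt
  have h1 : 0 ≤ x - (⌊x⌋₊ : ℝ) := sub_nonneg.mpr (Nat.floor_le hx)
  nlinarith

/-- Rounding a `ξ`-approximate fractional solution yields a `2ξ`-approximate
integer-feasible solution. -/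
theorem lp_rounding_xi_approx {G D : Type*} [Fintype G] [DecidableEq G] [Fintype D]
    (sets : D → Finset G) (w : D → ℝ) (hw : ∀ t, 0 ≤ w t) (Q : G → ℕ)
    (ξ : ℝ) (hξ : 1 ≤ ξ)
    (opt : Finset G → ℕ) (hopt : IntFeasible sets Q opt)
    (hoptmin : ∀ y : Finset G → ℕ, IntFeasible sets Q y →
      ∑ H : Finset G, fH sets w H (opt H) ≤ ∑ H : Finset G, fH sets w H (y H))
    (xhat : Finset G → ℝ) (hxhat : FracFeasible sets Q xhat)
    (hle : ∑ H : Finset G, plExt (fH sets w H) (xhat H) ≤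
        ξ * ∑ H : Finset G, fH sets w H (opt H))
    (r : ℕ) (hr : r = ⌈∑ H : Finset G, (xhat H - (⌊xhat H⌋₊ : ℝ))⌉₊)
    (e' : Finset G → ℕ)
    (he' : ∀ H : Finset G, e' H = min (max ⌊xhat H⌋₊ (opt H)) (⌊xhat H⌋₊ + r)) :
    IntFeasible sets Q e' ∧
    ∑ H : Finset G, fH sets w H (e' H) ≤
      2 * ξ * ∑ H : Finset G, fH sets w H (opt H) := by
  have hOPT0 : 0 ≤ ∑ H : Finset G, fH sets w H (opt H) :=
    Finset.sum_nonneg fun H _ => fH_nonneg sets w hw H _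
  constructor
  · constructor
    · intro H
      rw [he']
      have h1 : ⌊xhat H⌋₊ ≤ (bucket sets H).card := by
        calc ⌊xhat H⌋₊ ≤ ⌊((bucket sets H).card : ℝ)⌋₊ := Nat.floor_mono (hxhat.1 H).2
          _ = (bucket sets H).card := Nat.floor_natCast _
      exact le_trans (min_le_left _ _) (max_le h1 (hopt.1 H))
    · intro g
      set S := Finset.univ.filter (fun H : Finset G => g ∈ H) with hS
      have hQnat : Q g ≤ r + ∑ H ∈ S, ⌊xhat H⌋₊ := by
        have h1 : (Q g : ℝ) ≤ ∑ H ∈ S, xhat H := hxhat.2 g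
        have h2 : ∑ H ∈ S, (xhat H - (⌊xhat H⌋₊ : ℝ)) ≤
            ∑ H : Finset G, (xhat H - (⌊xhat H⌋₊ : ℝ)) :=
          Finset.sum_le_sum_of_subset_of_nonneg (Finset.subset_univ S)
            (fun H _ _ => sub_nonneg.mpr (Nat.floor_le (hxhat.1 H).1))
        have h3 : ∑ H : Finset G, (xhat H - (⌊xhat H⌋₊ : ℝ)) ≤ (r : ℝ) := by
          rw [hr]; exact Nat.le_ceil _
        have h0 : ∑ H ∈ S, (xhat H - (⌊xhat H⌋₊ : ℝ)) =
            ∑ H ∈ S, xhat H - ∑ H ∈ S, (⌊xhat H⌋₊ : ℝ) := Finset.sum_sub_distrib _ _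
        have : (Q g : ℝ) ≤ (r : ℝ) + ∑ H ∈ S, (⌊xhat H⌋₊ : ℝ) := by linarith
        exact_mod_cast this
      by_cases hc : ∀ H ∈ S, opt H ≤ e' H
      · calc Q g ≤ ∑ H ∈ S, opt H := hopt.2 g
          _ ≤ ∑ H ∈ S, e' H := Finset.sum_le_sum hc
      · push_neg at hc
        obtain ⟨H₀, hH₀S, hH₀⟩ := hc
        have he'H₀ : ⌊xhat H₀⌋₊ + r ≤ e' H₀ := by
          rw [he'] at hH₀ ⊢
          rcases min_cases (max ⌊xhat H₀⌋₊ (opt H₀)) (⌊xhat H₀⌋₊ + r) with ⟨h, _⟩ | ⟨h, _⟩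
          · exfalso; rw [h] at hH₀; exact absurd (le_max_right _ _) (not_le.mpr hH₀)
          · rw [h]
        have hlb : ∀ H ∈ S.erase H₀, ⌊xhat H⌋₊ ≤ e' H := by
          intro H _
          rw [he']
          exact le_min (le_max_left _ _) (Nat.le_add_right _ _)
        have hsum1 : e' H₀ + ∑ H ∈ S.erase H₀, e' H = ∑ H ∈ S, e' H :=
          Finset.add_sum_erase S e' hH₀S
        have hsum2 : ⌊xhat H₀⌋₊ + ∑ H ∈ S.erase H₀, ⌊xhat H⌋₊ =
            ∑ H ∈ S, ⌊xhat H⌋₊ := Finset.add_sum_erase S (fun H => ⌊xhat H⌋₊) hH₀S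
        have hsum3 : ∑ H ∈ S.erase H₀, ⌊xhat H⌋₊ ≤ ∑ H ∈ S.erase H₀, e' H :=
          Finset.sum_le_sum hlb
        omega
  · have key : ∀ H ∈ (Finset.univ : Finset (Finset G)),
        fH sets w H (e' H) ≤ plExt (fH sets w H) (xhat H) + fH sets w H (opt H) := by
      intro H _
      have h1 : fH sets w H (e' H) ≤ fH sets w H (max ⌊xhat H⌋₊ (opt H)) :=
        fH_mono sets w hw H (by rw [he']; exact min_le_left _ _)
      have h2 : fH sets w H (max ⌊xhat H⌋₊ (opt H)) ≤
          fH sets w H ⌊xhat H⌋₊ + fH sets w H (opt H) := by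
        rcases max_cases ⌊xhat H⌋₊ (opt H) with ⟨h, _⟩ | ⟨h, _⟩ <;> rw [h]
        · linarith [fH_nonneg sets w hw H (opt H)]
        · linarith [fH_nonneg sets w hw H ⌊xhat H⌋₊]
      have h3 : fH sets w H ⌊xhat H⌋₊ ≤ plExt (fH sets w H) (xhat H) :=
        le_plExt (fH_mono sets w hw H (Nat.le_succ _)) (hxhat.1 H).1
      linarith
    calc ∑ H : Finset G, fH sets w H (e' H)
        ≤ ∑ H : Finset G, (plExt (fH sets w H) (xhat H) + fH sets w H (opt H)) :=
          Finset.sum_le_sum key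
      _ = ∑ H : Finset G, plExt (fH sets w H) (xhat H) +
            ∑ H : Finset G, fH sets w H (opt H) := Finset.sum_add_distrib
      _ ≤ 2 * ξ * ∑ H : Finset G, fH sets w H (opt H) := by nlinarith
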